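/- In the uniform-discount setting (γ ∈ (0,1)), if Q = Q_1 C Q_2 is an s → t walk where C is a nonempty closed walk and c(CQ_2) < c(Q_2), then c(Q_1 C C Q_2) < c(Q_1 C Q_2). Consequently, a minimum-cost s → t walk of the minimal possible length cannot contain a closed subwalk C with c(CQ_2) < c(Q_2). -/
import Mathlib


/-- Discounted cost of a walk with a uniform discount factor `γ`. -/
def ucost {E : Type*} (c : E → ℝ) (γ : ℝ) : List E → ℝ
  | [] => 0
  | e :: P => c e + γ * ucost c γ P

/-- A list of edges forms a walk from `s` to `t`. -/
inductive IsWalk {V E : Type*} (tail head : E → V) : V → List E → V → Prop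
  | nil (v : V) : IsWalk tail head v [] v
  | cons (e : E) {P : List E} {w : V} :
      IsWalk tail head (head e) P w → IsWalk tail head (tail e) (e :: P) w

lemma ucost_append {E : Type*} (c : E → ℝ) (γ : ℝ) (P Q : List E) :
    ucost c γ (P ++ Q) = ucost c γ P + γ ^ P.length * ucost c γ Q := by
  induction P with
  | nil => simp [ucost]
  | cons e P ih => simp [ucost, ih, pow_succ]; ring

lemma IsWalk.append {V E : Type*} {tail head : E → V} {u v w : V} {P Q : List E}
    (hP : IsWalk tail head u P v) (hQ : IsWalk tail head v Q w) :
    IsWalk tail head u (P ++ Q) w := by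
  induction hP with
  | nil => simpa
  | cons e _ ih => exact IsWalk.cons e (ih hQ)

theorem stmt11 {V E : Type*} (tail head : E → V) (c : E → ℝ) (γ : ℝ)
    (hγ0 : 0 < γ) (hγ1 : γ < 1) (s v t : V) (Q₁ C Q₂ : List E)
    (hQ₁ : IsWalk tail head s Q₁ v) (hC : IsWalk tail head v C v)
    (hQ₂ : IsWalk tail head v Q₂ t) (hne : C ≠ []) :
    (ucost c γ (C ++ Q₂) < ucost c γ Q₂ →
      ucost c γ (Q₁ ++ C ++ C ++ Q₂) < ucost c γ (Q₁ ++ C ++ Q₂)) ∧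
    ((∀ R, IsWalk tail head s R t →
        ucost c γ (Q₁ ++ C ++ Q₂) ≤ ucost c γ R) →
     (∀ R, IsWalk tail head s R t → ucost c γ R = ucost c γ (Q₁ ++ C ++ Q₂) →
        (Q₁ ++ C ++ Q₂).length ≤ R.length) →
     ¬ ucost c γ (C ++ Q₂) < ucost c γ Q₂) := by
  have key : ucost c γ (C ++ Q₂) < ucost c γ Q₂ →
      ucost c γ (Q₁ ++ C ++ C ++ Q₂) < ucost c γ (Q₁ ++ C ++ Q₂) := by
    intro h
    have h1 : ucost c γ (C ++ (C ++ Q₂)) < ucost c γ (C ++ Q₂) := by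
      rw [ucost_append c γ C (C ++ Q₂), ucost_append c γ C Q₂]
      have := mul_lt_mul_of_pos_left h (pow_pos hγ0 C.length)
      rw [ucost_append c γ C Q₂] at this
      linarith
    calc ucost c γ (Q₁ ++ C ++ C ++ Q₂)
        = ucost c γ Q₁ + γ ^ Q₁.length * ucost c γ (C ++ (C ++ Q₂)) := by
          rw [List.append_assoc, List.append_assoc, ucost_append]
      _ < ucost c γ Q₁ + γ ^ Q₁.length * ucost c γ (C ++ Q₂) := by
          have := mul_lt_mul_of_pos_left h1 (pow_pos hγ0 Q₁.length)
          linarith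
      _ = ucost c γ (Q₁ ++ C ++ Q₂) := by
          rw [List.append_assoc, ucost_append c γ Q₁ (C ++ Q₂), ucost_append c γ C Q₂]
  refine ⟨key, fun hmin _ h ↦ ?_⟩
  have hW : IsWalk tail head s (Q₁ ++ C ++ C ++ Q₂) t :=
    ((hQ₁.append hC).append hC).append hQ₂
  exact absurd (hmin _ hW) (not_le.mpr (key h))
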